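/- A graph G is separated for the double negation topology on the topos of graphs if and only if G has no parallel arcs, i.e., for any two arcs a, b with src(a) = src(b) and tgt(a) = tgt(b) we have a = b. -/

import Mathlib

/-- A directed graph: nodes, arcs, source and target maps. -/
structure DGraph where
  N : Type
  A : Type
  src : A → N
  tgt : A → N

/-- A graph morphism. -/
@[ext]
structure Hom (G H : DGraph) where
  fN : G.N → H.N
  fA : G.A → H.A
  hsrc : ∀ a, H.src (fA a) = fN (G.src a)
  htgt : ∀ a, H.tgt (fA a) = fN (G.tgt a)

/-- Composition of graph morphisms. -/
def Hom.comp {G H K : DGraph} (g : Hom H K) (f : Hom G H) : Hom G K where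
  fN := g.fN ∘ f.fN
  fA := g.fA ∘ f.fA
  hsrc a := by simp [g.hsrc, f.hsrc]
  htgt a := by simp [g.htgt, f.htgt]

/-- A subgraph of `G`, given by a set of nodes and a set of arcs whose
endpoints belong to the node set. -/
def IsSubgraph (G : DGraph) (SN : Set G.N) (SA : Set G.A) : Prop :=
  ∀ a ∈ SA, G.src a ∈ SN ∧ G.tgt a ∈ SN

/-- The subgraph of `Y` determined by node set `SN` and arc set `SA`. -/
def subG (Y : DGraph) (SN : Set Y.N) (SA : Set Y.A) (h : IsSubgraph Y SN SA) : DGraph where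
  N := SN
  A := SA
  src a := ⟨Y.src a.val, (h a.val a.prop).1⟩
  tgt a := ⟨Y.tgt a.val, (h a.val a.prop).2⟩

/-- The inclusion of a subgraph. -/
def incl (Y : DGraph) (SN : Set Y.N) (SA : Set Y.A) (h : IsSubgraph Y SN SA) :
    Hom (subG Y SN SA h) Y :=
  ⟨Subtype.val, Subtype.val, fun _ => rfl, fun _ => rfl⟩

/-- `G` is separated for the double negation topology: for every dense subgraph
(i.e. one containing all nodes) of any graph `Y`, two morphisms `Y → G` agreeing
on the subgraph are equal. -/
def SeparatedNN (G : DGraph) : Prop :=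
  ∀ (Y : DGraph) (SA : Set Y.A) (h : IsSubgraph Y Set.univ SA)
    (g₁ g₂ : Hom Y G),
      g₁.comp (incl Y Set.univ SA h) = g₂.comp (incl Y Set.univ SA h) → g₁ = g₂

/-! A morphism into `G` is determined on the dense subgraph `Y.N ⊆ Y` exactly up to the choice,
for each arc of `Y`, of an arc of `G` between the prescribed endpoints; so uniqueness holds
precisely when `G` has no parallel arcs. For the converse, the two parallel arcs are the two
images of the single arc of `arrowGraph`, whose discrete subgraph is dense. -/

theorem isSubgraph_univ (Y : DGraph) (SA : Set Y.A) : IsSubgraph Y Set.univ SA :=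
  fun _ _ => ⟨trivial, trivial⟩

namespace Hom

variable {Y G : DGraph}

theorem fN_eq_of_comp_incl_eq {SA : Set Y.A} {h : IsSubgraph Y Set.univ SA} {g₁ g₂ : Hom Y G}
    (heq : g₁.comp (incl Y Set.univ SA h) = g₂.comp (incl Y Set.univ SA h)) : g₁.fN = g₂.fN :=
  funext fun x => congrFun (congrArg Hom.fN heq) ⟨x, trivial⟩

theorem ext_of_fN_eq (hG : ∀ a b : G.A, G.src a = G.src b → G.tgt a = G.tgt b → a = b)
    {g₁ g₂ : Hom Y G} (hN : g₁.fN = g₂.fN) : g₁ = g₂ := by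
  refine Hom.ext hN (funext fun x => hG _ _ ?_ ?_)
  · rw [g₁.hsrc, g₂.hsrc, hN]
  · rw [g₁.htgt, g₂.htgt, hN]

end Hom

def arrowGraph : DGraph := ⟨Bool, Unit, fun _ => false, fun _ => true⟩

def Hom.ofArc {G : DGraph} (a : G.A) : Hom arrowGraph G where
  fN b := cond b (G.tgt a) (G.src a)
  fA _ := a
  hsrc _ := rfl
  htgt _ := rfl

theorem Hom.ofArc_comp_incl_eq {G : DGraph} {a b : G.A} (hs : G.src a = G.src b)
    (ht : G.tgt a = G.tgt b) :
    (ofArc a).comp (incl arrowGraph Set.univ ∅ (isSubgraph_univ _ _)) =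
      (ofArc b).comp (incl arrowGraph Set.univ ∅ (isSubgraph_univ _ _)) := by
  ext x
  · rcases x with ⟨_ | _, _⟩
    exacts [hs, ht]
  · exact x.2.elim

/-- a graph is separated for the double negation topology iff it
has no parallel arcs. -/
theorem separated_iff_no_parallel (G : DGraph) :
    SeparatedNN G ↔
      ∀ a b : G.A, G.src a = G.src b → G.tgt a = G.tgt b → a = b := by
  refine ⟨fun hsep a b hs ht => ?_, fun hG Y SA h g₁ g₂ heq => ?_⟩
  · have := hsep arrowGraph ∅ (isSubgraph_univ _ _) _ _ (Hom.ofArc_comp_incl_eq hs ht)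
    exact congrArg (fun g : Hom arrowGraph G => g.fA ()) this
  · exact Hom.ext_of_fN_eq hG (Hom.fN_eq_of_comp_incl_eq heq)
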